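/- Let v₁,…,v_N be an enumeration of the vertices {1,…,N} with no repeats, let S_i = {v₁,…,v_i}, and suppose rank(M_{S_k} U) = k. Then for every m' with k < m' ≤ N and every v ∈ S_{m'} ∖ S_k, τ(S_{m'}, v) ≤ 0; hence removing such a vertex does not improve S_{m'} at any SNR. -/

import Mathlib

/-!
Once `S` contains `S_k`, the matrix `A = M_S U` has full column rank, so `A† = (AᵀA)⁻¹Aᵀ` is a
left inverse of `A`: the reconstruction is exact (`ξ₁ = 0`) and, as `UᵀU = I`,
`ξ₂(S) = tr (AᵀA)⁻¹`. The Gram matrix `AᵀA = ∑_{j ∈ S} u_j u_jᵀ` (with `u_j` the `j`-th row of `U`)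
loses the rank-one term `u_w u_wᵀ` when `w` is removed, and by Sherman–Morrison
`tr (G + uuᵀ)⁻¹ = tr G⁻¹ - ‖G⁻¹u‖² / (1 + uᵀG⁻¹u) ≤ tr G⁻¹` for positive definite `G`.
-/

open Matrix

noncomputable section

open scoped Classical in
/-- The Moore–Penrose pseudoinverse of a real matrix, characterised by the four
Penrose conditions:  `A A† A = A`, `A† A A† = A†`, `(A A†)ᵀ = A A†`, `(A† A)ᵀ = A† A`. -/
noncomputable def pinv {m n : Type*} [Fintype m] [Fintype n] [DecidableEq m] [DecidableEq n]
    (A : Matrix m n ℝ) : Matrix n m ℝ :=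
  if h : ∃ B : Matrix n m ℝ,
      A * B * A = A ∧ B * A * B = B ∧ (A * B)ᵀ = A * B ∧ (B * A)ᵀ = B * A
  then h.choose else 0

/-- The sampling matrix `M_S` of a subset `S ⊆ {1,…,N}`: rows are indexed by the
elements of `S`, and the row corresponding to `j ∈ S` is the standard basis row vector `eⱼᵀ`. -/
def samp {N : ℕ} (S : Finset (Fin N)) : Matrix {x // x ∈ S} (Fin N) ℝ :=
  fun i j => if (i : Fin N) = j then 1 else 0

/-- Squared Frobenius norm of a matrix. -/
def frobSq {m n : Type*} [Fintype m] [Fintype n] (A : Matrix m n ℝ) : ℝ :=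
  ∑ i, ∑ j, (A i j) ^ 2

/-- The least-squares reconstruction matrix `R_S = U (M_S U)†`. -/
def lsRec {N k : ℕ} (U : Matrix (Fin N) (Fin k) ℝ) (S : Finset (Fin N)) :
    Matrix (Fin N) {x // x ∈ S} ℝ :=
  U * pinv (samp S * U)

/-- `ξ₁(S) = ‖U − R_S M_S U‖_F²`, the noiseless reconstruction error. -/
def xi1 {N k : ℕ} (U : Matrix (Fin N) (Fin k) ℝ) (S : Finset (Fin N)) : ℝ :=
  frobSq (U - lsRec U S * (samp S * U))

/-- `ξ₂(S) = ‖R_S‖_F²`, the noise-sensitivity term. -/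
def xi2 {N k : ℕ} (U : Matrix (Fin N) (Fin k) ℝ) (S : Finset (Fin N)) : ℝ :=
  frobSq (lsRec U S)

/-- `S_m = {v₁,…,v_m}`: the set consisting of the first `m` vertices of the
enumeration `v` (0-indexed: the vertices `v j` for `j < m`). -/
def firstSamples {N : ℕ} (v : Fin N → Fin N) (m : ℕ) : Finset (Fin N) :=
  (Finset.univ.filter fun j : Fin N => (j : ℕ) < m).image v

namespace Matrix

variable {m n : Type*} [Fintype m] [Fintype n]

theorem posDef_transpose_mul_self_of_rank_eq (A : Matrix m n ℝ) (hA : A.rank = Fintype.card n) :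
    (Aᵀ * A).PosDef := by
  have hker := A.mulVecLin.finrank_range_add_finrank_ker
  rw [← rank, hA, Module.finrank_fintype_fun_eq_card, add_eq_left,
    Submodule.finrank_eq_zero] at hker
  simpa using PosDef.conjTranspose_mul_self A (LinearMap.ker_eq_bot.mp hker)

variable [DecidableEq n]

theorem inv_add_vecMulVec {K : Type*} [Field K] (A : Matrix n n K) (hA : IsUnit A.det)
    (u v : n → K) (h : 1 + v ⬝ᵥ (A⁻¹ *ᵥ u) ≠ 0) :
    (A + vecMulVec u v)⁻¹ =
      A⁻¹ - (1 + v ⬝ᵥ (A⁻¹ *ᵥ u))⁻¹ • vecMulVec (A⁻¹ *ᵥ u) (v ᵥ* A⁻¹) := by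
  apply inv_eq_right_inv
  have hcorr : (A + vecMulVec u v) * vecMulVec (A⁻¹ *ᵥ u) (v ᵥ* A⁻¹) =
      (1 + v ⬝ᵥ (A⁻¹ *ᵥ u)) • vecMulVec u (v ᵥ* A⁻¹) := by
    rw [add_mul, mul_vecMulVec, mulVec_mulVec, mul_nonsing_inv _ hA, one_mulVec,
      vecMulVec_mul_vecMulVec, vecMulVec_smul, add_smul, one_smul]
  rw [mul_sub, Matrix.mul_smul, hcorr, smul_smul, inv_mul_cancel₀ h, one_smul, add_mul,
    mul_nonsing_inv _ hA, vecMulVec_mul, add_sub_cancel_right]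

theorem PosDef.trace_inv_add_vecMulVec_self_le {G : Matrix n n ℝ} (hG : G.PosDef) (u : n → ℝ) :
    trace (G + vecMulVec u u)⁻¹ ≤ trace G⁻¹ := by
  have hsymm : (G⁻¹)ᵀ = G⁻¹ := hG.inv.isHermitian
  have hc : 0 ≤ u ⬝ᵥ (G⁻¹ *ᵥ u) := hG.inv.posSemidef.dotProduct_mulVec_nonneg u
  have hy : u ᵥ* G⁻¹ = G⁻¹ *ᵥ u := by rw [← mulVec_transpose, hsymm]
  rw [inv_add_vecMulVec G ((isUnit_iff_isUnit_det G).mp hG.isUnit) u u (by positivity),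
    trace_sub, trace_smul, trace_vecMulVec, hy, smul_eq_mul, sub_le_self_iff]
  exact mul_nonneg (by positivity) (dotProduct_self_star_nonneg _)

end Matrix

section PseudoInverse

variable {m n p : Type*} [Fintype m] [Fintype n] [Fintype p]

theorem frobSq_eq_trace (M : Matrix m n ℝ) : frobSq M = trace (Mᵀ * M) := by
  rw [frobSq, trace, Finset.sum_comm]
  simp [diag, mul_apply, sq]

theorem frobSq_mul_of_transpose_mul_self [DecidableEq m] (U : Matrix p m ℝ) (hU : Uᵀ * U = 1)
    (M : Matrix m n ℝ) : frobSq (U * M) = frobSq M := by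
  rw [frobSq_eq_trace, frobSq_eq_trace, transpose_mul, Matrix.mul_assoc, ← Matrix.mul_assoc Uᵀ, hU,
    Matrix.one_mul]

variable [DecidableEq m] [DecidableEq n]

theorem pinv_eq_of_isUnit_det (A : Matrix m n ℝ) (hA : IsUnit (Aᵀ * A).det) :
    pinv A = (Aᵀ * A)⁻¹ * Aᵀ := by
  set B := (Aᵀ * A)⁻¹ * Aᵀ
  have hBA : B * A = 1 := by rw [Matrix.mul_assoc]; exact nonsing_inv_mul _ hA
  have hAB : (A * B)ᵀ = A * B := by
    rw [transpose_mul, transpose_mul, transpose_transpose, transpose_nonsing_inv, transpose_mul,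
      transpose_transpose, Matrix.mul_assoc]
  have hex : ∃ P : Matrix n m ℝ,
      A * P * A = A ∧ P * A * P = P ∧ (A * P)ᵀ = A * P ∧ (P * A)ᵀ = P * A :=
    ⟨B, by rw [Matrix.mul_assoc, hBA, Matrix.mul_one], by rw [hBA, Matrix.one_mul], hAB,
      by rw [hBA, transpose_one]⟩
  obtain ⟨hAPA, -, hAP, -⟩ := hex.choose_spec
  rw [pinv, dif_pos hex]
  have hnormal : Aᵀ * A * hex.choose = Aᵀ := by
    rw [Matrix.mul_assoc, ← hAP, ← transpose_mul, hAPA]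
  calc hex.choose = (Aᵀ * A)⁻¹ * (Aᵀ * A * hex.choose) := by
        rw [← Matrix.mul_assoc, nonsing_inv_mul _ hA, Matrix.one_mul]
    _ = B := by rw [hnormal]

theorem pinv_mul_self_of_isUnit_det (A : Matrix m n ℝ) (hA : IsUnit (Aᵀ * A).det) :
    pinv A * A = 1 := by
  rw [pinv_eq_of_isUnit_det A hA, Matrix.mul_assoc, nonsing_inv_mul _ hA]

theorem frobSq_pinv_of_isUnit_det (A : Matrix m n ℝ) (hA : IsUnit (Aᵀ * A).det) :
    frobSq (pinv A) = trace (Aᵀ * A)⁻¹ := by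
  rw [frobSq_eq_trace, pinv_eq_of_isUnit_det A hA, transpose_mul, transpose_transpose,
    Matrix.mul_assoc, trace_mul_comm A]
  simp only [Matrix.mul_assoc]
  rw [nonsing_inv_mul _ hA, Matrix.mul_one, trace_transpose]

end PseudoInverse

section Sampling

variable {N : ℕ} {n : Type*}

theorem samp_mul (S : Finset (Fin N)) (U : Matrix (Fin N) n ℝ) :
    samp S * U = U.submatrix Subtype.val id := by
  ext i a
  simp [samp, mul_apply, ite_mul]

theorem transpose_samp_mul_mul_samp_mul (S : Finset (Fin N)) (U : Matrix (Fin N) n ℝ) :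
    (samp S * U)ᵀ * (samp S * U) = ∑ j ∈ S, vecMulVec (U j) (U j) := by
  ext a b
  simp only [samp_mul, mul_apply, transpose_apply, submatrix_apply, id_eq, Matrix.sum_apply,
    vecMulVec_apply]
  exact Finset.sum_coe_sort S fun j => U j a * U j b

theorem transpose_samp_mul_mul_samp_mul_of_mem {S : Finset (Fin N)} {w : Fin N} (hw : w ∈ S)
    (U : Matrix (Fin N) n ℝ) :
    (samp S * U)ᵀ * (samp S * U) =
      (samp (S.erase w) * U)ᵀ * (samp (S.erase w) * U) + vecMulVec (U w) (U w) := by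
  rw [transpose_samp_mul_mul_samp_mul, transpose_samp_mul_mul_samp_mul, Finset.sum_erase_add _ _ hw]

variable [Fintype n]

theorem rank_samp_mul_le_of_subset {S T : Finset (Fin N)} (hST : S ⊆ T) (U : Matrix (Fin N) n ℝ) :
    (samp S * U).rank ≤ (samp T * U).rank := by
  rw [samp_mul, samp_mul]
  exact rank_submatrix_le (U.submatrix Subtype.val id) (fun i : S => (⟨i, hST i.2⟩ : T)) id

theorem rank_samp_mul_eq_of_subset {S T : Finset (Fin N)} (hST : S ⊆ T) (U : Matrix (Fin N) n ℝ)
    (hS : (samp S * U).rank = Fintype.card n) : (samp T * U).rank = Fintype.card n :=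
  le_antisymm (rank_le_card_width _) (hS ▸ rank_samp_mul_le_of_subset hST U)

end Sampling

section Reconstruction

variable {N k : ℕ} (U : Matrix (Fin N) (Fin k) ℝ) {S : Finset (Fin N)}

theorem posDef_of_rank_samp_mul (hS : (samp S * U).rank = k) :
    ((samp S * U)ᵀ * (samp S * U)).PosDef :=
  posDef_transpose_mul_self_of_rank_eq _ (by rw [hS, Fintype.card_fin])

theorem isUnit_det_of_rank_samp_mul (hS : (samp S * U).rank = k) :
    IsUnit ((samp S * U)ᵀ * (samp S * U)).det :=
  (isUnit_iff_isUnit_det _).mp (posDef_of_rank_samp_mul U hS).isUnit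

theorem xi1_eq_zero_of_rank_samp_mul (hS : (samp S * U).rank = k) : xi1 U S = 0 := by
  rw [xi1, lsRec, Matrix.mul_assoc,
    pinv_mul_self_of_isUnit_det _ (isUnit_det_of_rank_samp_mul U hS), Matrix.mul_one, sub_self]
  simp [frobSq]

theorem xi2_eq_trace_of_rank_samp_mul (hU : Uᵀ * U = 1) (hS : (samp S * U).rank = k) :
    xi2 U S = trace ((samp S * U)ᵀ * (samp S * U))⁻¹ := by
  rw [xi2, lsRec, frobSq_mul_of_transpose_mul_self U hU,
    frobSq_pinv_of_isUnit_det _ (isUnit_det_of_rank_samp_mul U hS)]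

theorem xi2_le_xi2_erase (hU : Uᵀ * U = 1) {w : Fin N} (hw : w ∈ S)
    (hS : (samp (S.erase w) * U).rank = k) : xi2 U S ≤ xi2 U (S.erase w) := by
  have hS' : (samp S * U).rank = k := by
    simpa using rank_samp_mul_eq_of_subset (S.erase_subset w) U (by simpa using hS)
  rw [xi2_eq_trace_of_rank_samp_mul U hU hS', xi2_eq_trace_of_rank_samp_mul U hU hS,
    transpose_samp_mul_mul_samp_mul_of_mem hw]
  exact (posDef_of_rank_samp_mul U hS).trace_inv_add_vecMulVec_self_le _

end Reconstruction

theorem firstSamples_mono {N : ℕ} (v : Fin N → Fin N) {a b : ℕ} (hab : a ≤ b) :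
    firstSamples v a ⊆ firstSamples v b :=
  Finset.image_subset_image fun j hj => by
    simp only [Finset.mem_filter, Finset.mem_univ, true_and] at hj ⊢
    omega

theorem stmt4_general (N k : ℕ)
    (U : Matrix (Fin N) (Fin k) ℝ) (hU : Uᵀ * U = 1)
    (v : Fin N → Fin N)
    (hrank : (samp (firstSamples v k) * U).rank = k) :
    ∀ m' : ℕ, k < m' → m' ≤ N → ∀ w ∈ firstSamples v m' \ firstSamples v k,
      ((k : ℝ) / N) *
        (xi2 U (firstSamples v m') - xi2 U ((firstSamples v m').erase w)) ≤ 0 ∧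
      ∀ SNR : ℝ, 0 < SNR →
        xi1 U (firstSamples v m') + ((k : ℝ) / (N * SNR)) * xi2 U (firstSamples v m') ≤
          xi1 U ((firstSamples v m').erase w) +
            ((k : ℝ) / (N * SNR)) * xi2 U ((firstSamples v m').erase w) := by
  intro m' hkm' _ w hw
  obtain ⟨hwS, hwk⟩ := Finset.mem_sdiff.mp hw
  have hsub : firstSamples v k ⊆ (firstSamples v m').erase w :=
    Finset.subset_erase.mpr ⟨firstSamples_mono v hkm'.le, hwk⟩
  have hfull : ∀ T, firstSamples v k ⊆ T → (samp T * U).rank = k := fun T hT => by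
    simpa using rank_samp_mul_eq_of_subset hT U (by simpa using hrank)
  have hle := xi2_le_xi2_erase U hU hwS (hfull _ hsub)
  refine ⟨mul_nonpos_of_nonneg_of_nonpos (by positivity) (sub_nonpos.mpr hle), fun SNR hSNR => ?_⟩
  rw [xi1_eq_zero_of_rank_samp_mul U (hfull _ (firstSamples_mono v hkm'.le)),
    xi1_eq_zero_of_rank_samp_mul U (hfull _ hsub)]
  gcongr

/-- if `rank(M_{S_k} U) = k` then for every `m'` with `k < m' ≤ N` and
every `v ∈ S_{m'} ∖ S_k`, `τ(S_{m'}, v) ≤ 0`; hence removing such a vertex does not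
improve `S_{m'}` at any `SNR > 0`. -/
theorem stmt4 (N k : ℕ) (hN : 0 < N) (hk : 0 < k) (hkN : k ≤ N)
    (U : Matrix (Fin N) (Fin k) ℝ) (hU : Uᵀ * U = 1)
    (v : Fin N → Fin N) (hv : Function.Bijective v)
    (hrank : (samp (firstSamples v k) * U).rank = k) :
    ∀ m' : ℕ, k < m' → m' ≤ N → ∀ w ∈ firstSamples v m' \ firstSamples v k,
      ((k : ℝ) / N) *
        (xi2 U (firstSamples v m') - xi2 U ((firstSamples v m').erase w)) ≤ 0 ∧
      ∀ SNR : ℝ, 0 < SNR →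
        xi1 U (firstSamples v m') + ((k : ℝ) / (N * SNR)) * xi2 U (firstSamples v m') ≤
          xi1 U ((firstSamples v m').erase w) +
            ((k : ℝ) / (N * SNR)) * xi2 U ((firstSamples v m').erase w) :=
  stmt4_general N k U hU v hrank
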